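/- arXiv:1902.07819 — 6 statements merged into one kernel-verified Lean document; each statement's English description precedes it below -/
import Mathlib

section
/- Let m ≥ 2, 1 ≤ t < m, ρ ≥ 1, n ≥ ρ+1. With A_x as defined (first ρ coordinates free, coordinate ρ+1 shifted by 0,...,t−1, rest fixed, x removed), for any x, y ∈ Z_m^n the sumset A_x + A_y has at most (2t−1)·m^ρ elements, and hence at most 2(t·m^ρ − 1) elements. -/
/-!
`A_x` lies in the box `B_t(x)` of vectors agreeing with `x` beyond coordinate `ρ` and whose
coordinate `ρ` is `x_ρ + i` with `0 ≤ i < t`. Offsets add, so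
`B_s(x) + B_t(y) ⊆ B_{s+t-1}(x + y)`, and a box is parametrized by its `ρ` free coordinates
and its offset, so `#B_t(x) ≤ t · m^ρ`. The second bound then only needs `m^ρ ≥ 2`.
-/

/-- The model construction in `(ℤ/m)^n`: first `ρ` coordinates free, coordinate `ρ+1`
(0-indexed: `ρ`) shifted by `0, ..., t-1`, remaining coordinates fixed, and `x` removed. -/
def modelA (m n ρ t : ℕ) [NeZero m] (hρ : ρ < n) (x : Fin n → ZMod m) :
    Finset (Fin n → ZMod m) :=
  ((Finset.univ : Finset (Fin n → ZMod m)).filter fun z =>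
    (∀ j : Fin n, ρ < (j : ℕ) → z j = x j) ∧
    ∃ i : Fin t, z ⟨ρ, hρ⟩ = x ⟨ρ, hρ⟩ + ((i : ℕ) : ZMod m)).erase x

open Pointwise

section ModelBox

variable {m n ρ : ℕ} [NeZero m] (hρ : ρ < n)

def modelBox (t : ℕ) (x : Fin n → ZMod m) : Finset (Fin n → ZMod m) :=
  (Finset.univ : Finset (Fin n → ZMod m)).filter fun z =>
    (∀ j : Fin n, ρ < (j : ℕ) → z j = x j) ∧
    ∃ i : Fin t, z ⟨ρ, hρ⟩ = x ⟨ρ, hρ⟩ + ((i : ℕ) : ZMod m)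

theorem modelA_subset_modelBox (t : ℕ) (x : Fin n → ZMod m) :
    modelA m n ρ t hρ x ⊆ modelBox hρ t x :=
  Finset.erase_subset _ _

@[simp]
theorem mem_modelBox {t : ℕ} {x z : Fin n → ZMod m} :
    z ∈ modelBox hρ t x ↔ (∀ j : Fin n, ρ < (j : ℕ) → z j = x j) ∧
      ∃ i : Fin t, z ⟨ρ, hρ⟩ = x ⟨ρ, hρ⟩ + ((i : ℕ) : ZMod m) := by
  simp [modelBox]

theorem modelBox_add_modelBox_subset (s t : ℕ) (x y : Fin n → ZMod m) :
    modelBox hρ s x + modelBox hρ t y ⊆ modelBox hρ (s + t - 1) (x + y) := by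
  intro c hc
  obtain ⟨a, ha, b, hb, rfl⟩ := Finset.mem_add.1 hc
  obtain ⟨ha_fixed, i, ha_shift⟩ := (mem_modelBox hρ).1 ha
  obtain ⟨hb_fixed, k, hb_shift⟩ := (mem_modelBox hρ).1 hb
  refine (mem_modelBox hρ).2 ⟨fun j hj => ?_, ⟨⟨i + k, by omega⟩, ?_⟩⟩
  · simp only [Pi.add_apply, ha_fixed j hj, hb_fixed j hj]
  · simp only [Pi.add_apply, ha_shift, hb_shift, Nat.cast_add]
    ring

theorem card_modelBox_le (t : ℕ) (x : Fin n → ZMod m) :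
    (modelBox hρ t x).card ≤ t * m ^ ρ := by
  let point : (Fin ρ → ZMod m) × Fin t → Fin n → ZMod m := fun p j =>
    if h : (j : ℕ) < ρ then p.1 ⟨j, h⟩
    else if (j : ℕ) = ρ then x ⟨ρ, hρ⟩ + ((p.2 : ℕ) : ZMod m) else x j
  have surj : Set.SurjOn point (Finset.univ : Finset ((Fin ρ → ZMod m) × Fin t))
      (modelBox hρ t x) := by
    intro z hz
    obtain ⟨h_fixed, i, h_shift⟩ := (mem_modelBox hρ).1 hz
    refine ⟨(fun k => z ⟨k, k.2.trans hρ⟩, i), Finset.mem_coe.2 (Finset.mem_univ _), ?_⟩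
    funext j
    by_cases hlt : (j : ℕ) < ρ
    · simp [point, hlt]
    by_cases heq : (j : ℕ) = ρ
    · obtain rfl : j = ⟨ρ, hρ⟩ := Fin.ext heq
      simp [point, h_shift]
    · simp [point, hlt, heq, h_fixed j (by omega)]
  calc (modelBox hρ t x).card
      ≤ (Finset.univ : Finset ((Fin ρ → ZMod m) × Fin t)).card :=
        Finset.card_le_card_of_surjOn point surj
    _ = t * m ^ ρ := by simp [ZMod.card, mul_comm]

end ModelBox

theorem stmt_4_general (m n ρ t : ℕ) [NeZero m] (hm : 2 ≤ m)
    (hρ1 : 1 ≤ ρ) (hρ : ρ < n) (x y : Fin n → ZMod m) :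
    (modelA m n ρ t hρ x + modelA m n ρ t hρ y).card ≤ (2 * t - 1) * m ^ ρ ∧
    (modelA m n ρ t hρ x + modelA m n ρ t hρ y).card ≤ 2 * (t * m ^ ρ - 1) := by
  have sumset_le : (modelA m n ρ t hρ x + modelA m n ρ t hρ y).card ≤ (2 * t - 1) * m ^ ρ :=
    calc (modelA m n ρ t hρ x + modelA m n ρ t hρ y).card
        ≤ (modelBox hρ (t + t - 1) (x + y)).card :=
          Finset.card_le_card <|
            (Finset.add_subset_add (modelA_subset_modelBox hρ t x)
              (modelA_subset_modelBox hρ t y)).trans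
            (modelBox_add_modelBox_subset hρ t t x y)
      _ ≤ (t + t - 1) * m ^ ρ := card_modelBox_le hρ _ _
      _ = (2 * t - 1) * m ^ ρ := by rw [two_mul]
  have two_le_pow : 2 ≤ m ^ ρ := hm.trans (Nat.le_self_pow (by omega) m)
  refine ⟨sumset_le, sumset_le.trans ?_⟩
  rw [Nat.sub_mul, one_mul, mul_assoc]
  omega

/-- the sumset `A_x + A_y` has at most `(2t−1)·m^ρ` elements, hence at most
`2(t·m^ρ − 1)` elements. -/
theorem stmt_4 (m n ρ t : ℕ) [NeZero m] (hm : 2 ≤ m) (ht : 1 ≤ t) (htm : t < m)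
    (hρ1 : 1 ≤ ρ) (hρ : ρ < n) (x y : Fin n → ZMod m) :
    (modelA m n ρ t hρ x + modelA m n ρ t hρ y).card ≤ (2 * t - 1) * m ^ ρ ∧
    (modelA m n ρ t hρ x + modelA m n ρ t hρ y).card ≤ 2 * (t * m ^ ρ - 1) :=
  stmt_4_general m n ρ t hm hρ1 hρ x y
end

section
/- Let m ≥ 2, 1 ≤ t < m, ρ ≥ 1, n ≥ ρ+1. The map x ↦ A_x from Z_m^n to subsets of Z_m^n is injective, where A_x = {(z_1,...,z_ρ, x_{ρ+1}+i, x_{ρ+2},...,x_n) : z_j ∈ Z_m, 0 ≤ i ≤ t−1} \ {x}. -/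
/-- the map `x ↦ A_x` is injective on `(ℤ/m)^n`. -/
theorem stmt_5 (m n ρ t : ℕ) [NeZero m] (hm : 2 ≤ m) (ht : 1 ≤ t) (htm : t < m)
    (hρ1 : 1 ≤ ρ) (hρ : ρ < n) :
    Function.Injective (fun x : Fin n → ZMod m => modelA m n ρ t hρ x) := by
  haveI : Fact (1 < m) := ⟨hm⟩
  intro x y h
  simp only at h
  by_contra hxy
  set i0 : Fin n := ⟨0, by omega⟩ with hi0
  set iρ : Fin n := ⟨ρ, hρ⟩ with hiρ
  have hne : i0 ≠ iρ := by
    intro hh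
    rw [hi0, hiρ, Fin.ext_iff] at hh
    simp only [Fin.val_mk] at hh
    omega
  -- witness points z_c ∈ modelA x
  have hmem : ∀ c : ℕ, c < t →
      (Function.update (Function.update x i0 (x i0 + 1)) iρ (x iρ + (c : ZMod m)))
        ∈ modelA m n ρ t hρ x := by
    intro c hc
    set z := Function.update (Function.update x i0 (x i0 + 1)) iρ (x iρ + (c : ZMod m)) with hz
    have hz0 : z i0 = x i0 + 1 := by
      rw [hz, Function.update_of_ne hne, Function.update_self]
    have hzρ : z iρ = x iρ + (c : ZMod m) := by
      rw [hz, Function.update_self]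
    refine Finset.mem_erase.mpr ⟨?_, ?_⟩
    · intro hzx
      have : x i0 + 1 = x i0 := by rw [← hz0, hzx]
      simpa using this
    · refine Finset.mem_filter.mpr ⟨Finset.mem_univ _, ?_, ⟨⟨c, hc⟩, hzρ⟩⟩
      intro j hj
      have h1 : j ≠ iρ := by
        intro hh; rw [hiρ, Fin.ext_iff] at hh; simp only [Fin.val_mk] at hh; omega
      have h2 : j ≠ i0 := by
        intro hh; rw [hi0, Fin.ext_iff] at hh; simp only [Fin.val_mk] at hh; omega
      rw [hz, Function.update_of_ne h1, Function.update_of_ne h2]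
  -- consequences of z_c ∈ modelA y
  have hcons : ∀ c : ℕ, c < t →
      (∀ j : Fin n, ρ < (j : ℕ) → x j = y j) ∧
      ∃ i : Fin t, x iρ + (c : ZMod m) = y iρ + ((i : ℕ) : ZMod m) := by
    intro c hc
    have hm2 := hmem c hc
    rw [h] at hm2
    obtain ⟨hzy, hm3⟩ := Finset.mem_erase.mp hm2
    obtain ⟨-, hj, i, hi⟩ := Finset.mem_filter.mp hm3
    constructor
    · intro j hjρ
      have h1 : j ≠ iρ := by
        intro hh; rw [hiρ, Fin.ext_iff] at hh; simp only [Fin.val_mk] at hh; omega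
      have h2 : j ≠ i0 := by
        intro hh; rw [hi0, Fin.ext_iff] at hh; simp only [Fin.val_mk] at hh; omega
      have := hj j hjρ
      rw [Function.update_of_ne h1, Function.update_of_ne h2] at this
      rw [← this]
    · exact ⟨i, by rw [← hi, Function.update_self]⟩
  -- symmetric versions
  have hmem' : ∀ c : ℕ, c < t →
      (Function.update (Function.update y i0 (y i0 + 1)) iρ (y iρ + (c : ZMod m)))
        ∈ modelA m n ρ t hρ y := by
    intro c hc
    set z := Function.update (Function.update y i0 (y i0 + 1)) iρ (y iρ + (c : ZMod m)) with hz
    have hz0 : z i0 = y i0 + 1 := by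
      rw [hz, Function.update_of_ne hne, Function.update_self]
    refine Finset.mem_erase.mpr ⟨?_, ?_⟩
    · intro hzy
      have : y i0 + 1 = y i0 := by rw [← hz0, hzy]
      simpa using this
    · refine Finset.mem_filter.mpr ⟨Finset.mem_univ _, ?_, ⟨⟨c, hc⟩, by rw [hz, Function.update_self]⟩⟩
      intro j hj
      have h1 : j ≠ iρ := by
        intro hh; rw [hiρ, Fin.ext_iff] at hh; simp only [Fin.val_mk] at hh; omega
      have h2 : j ≠ i0 := by
        intro hh; rw [hi0, Fin.ext_iff] at hh; simp only [Fin.val_mk] at hh; omega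
      rw [hz, Function.update_of_ne h1, Function.update_of_ne h2]
  have hcons' : ∀ c : ℕ, c < t →
      ∃ i : Fin t, y iρ + (c : ZMod m) = x iρ + ((i : ℕ) : ZMod m) := by
    intro c hc
    have hm2 := hmem' c hc
    rw [← h] at hm2
    obtain ⟨hzy, hm3⟩ := Finset.mem_erase.mp hm2
    obtain ⟨-, hj, i, hi⟩ := Finset.mem_filter.mp hm3
    exact ⟨i, by rw [← hi, Function.update_self]⟩
  -- coordinate agreement for j > ρ
  have hjall : ∀ j : Fin n, ρ < (j : ℕ) → x j = y j := (hcons 0 ht).1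
  -- agreement at ρ
  obtain ⟨i, hi⟩ := hcons' 0 ht
  set k : ℕ := (i : ℕ) with hk
  have hkt : k < t := i.isLt
  have hyx : y iρ = x iρ + (k : ZMod m) := by simpa using hi
  have hρeq : x iρ = y iρ := by
    rcases Nat.eq_zero_or_pos k with hk0 | hk0
    · rw [hyx, hk0]; simp
    · exfalso
      obtain ⟨i', hi'⟩ := (hcons (k - 1) (by omega)).2
      rw [hyx] at hi'
      have hcast : (((k - 1 : ℕ)) : ZMod m) = (((k + (i' : ℕ) : ℕ)) : ZMod m) := by
        push_cast at hi' ⊢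
        linear_combination hi'
      have hmod := (ZMod.natCast_eq_natCast_iff _ _ _).mp hcast
      have hdvd : m ∣ (k + (i' : ℕ)) - (k - 1) :=
        (Nat.modEq_iff_dvd' (by omega)).mp hmod
      have hlt := i'.isLt
      have heq : (k + (i' : ℕ)) - (k - 1) = (i' : ℕ) + 1 := by omega
      rw [heq] at hdvd
      have := Nat.le_of_dvd (by omega) hdvd
      omega
  -- conclude: y ∈ modelA x = modelA y, contradiction
  have hymem : y ∈ modelA m n ρ t hρ x := by
    refine Finset.mem_erase.mpr ⟨Ne.symm hxy, Finset.mem_filter.mpr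
      ⟨Finset.mem_univ _, fun j hj => (hjall j hj).symm, ⟨0, ht⟩, ?_⟩⟩
    rw [← hρeq]
    simp [hiρ]
  rw [h] at hymem
  exact Finset.notMem_erase y _ hymem
end

section
/- Let k ≥ 1 and let G be a finite abelian group with an element of order greater than k (equivalently, exponent > k). Then for every S ⊆ G × G with |S| ≥ c·|G|² (c > 0), there exist at most 4k elements of G spanning at least c·(k−1)² triples (a, b, a+b) with (a, b) ∈ S. -/
/-- if `G` is a finite abelian group with an element of (additive) order
greater than `k`, then for every `S ⊆ G × G` with `|S| ≥ c·|G|²` there is a set of at most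
`4k` elements of `G` spanning at least `c·(k−1)²` triples `(a, b, a+b)` with `(a, b) ∈ S`. -/
theorem stmt_8 (k : ℕ) (hk : 1 ≤ k) (G : Type) [AddCommGroup G] [Fintype G] [DecidableEq G]
    (hexp : ∃ g : G, k < addOrderOf g) (c : ℝ) (hc : 0 < c)
    (S : Finset (G × G)) (hS : c * (Fintype.card G : ℝ) ^ 2 ≤ S.card) :
    ∃ T : Finset G, T.card ≤ 4 * k ∧
      c * ((k : ℝ) - 1) ^ 2 ≤
        ((S.filter fun p => p.1 ∈ T ∧ p.2 ∈ T ∧ p.1 + p.2 ∈ T).card : ℝ) := by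
  classical
  obtain ⟨g, hg⟩ := hexp
  -- injectivity of i ↦ i • g for i < k
  have hginj : ∀ i j : ℕ, i < k → j < k → i • g = j • g → i = j := by
    have key : ∀ i j : ℕ, i ≤ j → j < k → i • g = j • g → i = j := by
      intro i j hij hj h
      have h0 : (j - i) • g = 0 := by
        rw [sub_nsmul _ hij, ← h]
        simp
      have hd := addOrderOf_dvd_of_nsmul_eq_zero h0
      have : j - i = 0 := Nat.eq_zero_of_dvd_of_lt hd (by omega)
      omega
    intro i j hi hj h
    rcases le_total i j with hij | hij
    · exact key i j hij hj h
    · exact (key j i hij hi h.symm).symm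
  -- counting function
  set F : G × G → ℕ := fun p => ((Finset.range k ×ˢ Finset.range k).filter
      fun ij => (p.1 + ij.1 • g, p.2 + ij.2 • g) ∈ S).card with hF
  -- total count
  have hsum : ∑ p : G × G, F p = k ^ 2 * S.card := by
    have h1 : ∀ p : G × G, F p = ∑ ij ∈ Finset.range k ×ˢ Finset.range k,
        if (p.1 + ij.1 • g, p.2 + ij.2 • g) ∈ S then 1 else 0 := by
      intro p; rw [hF]; exact Finset.card_filter _ _
    simp_rw [h1]
    rw [Finset.sum_comm]
    have h2 : ∀ ij ∈ Finset.range k ×ˢ Finset.range k,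
        (∑ p : G × G, if (p.1 + ij.1 • g, p.2 + ij.2 • g) ∈ S then 1 else 0) = S.card := by
      intro ij _
      have := Fintype.sum_equiv (Equiv.addRight (ij.1 • g, ij.2 • g))
        (fun p : G × G => if p + (ij.1 • g, ij.2 • g) ∈ S then 1 else 0)
        (fun p : G × G => if p ∈ S then 1 else 0) (by intro p; rfl)
      calc (∑ p : G × G, if (p.1 + ij.1 • g, p.2 + ij.2 • g) ∈ S then 1 else 0)
          = ∑ p : G × G, if p + (ij.1 • g, ij.2 • g) ∈ S then 1 else 0 := by
            apply Finset.sum_congr rfl; intro p _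
            congr 1
        _ = ∑ p : G × G, if p ∈ S then 1 else 0 := this
        _ = S.card := by rw [← Finset.card_filter]; simp
    rw [Finset.sum_congr rfl h2, Finset.sum_const, Finset.card_product,
      Finset.card_range, smul_eq_mul, sq]
  -- pick a maximizer
  obtain ⟨p, -, hpmax⟩ := Finset.exists_max_image (Finset.univ : Finset (G × G)) F
    ⟨(0, 0), Finset.mem_univ _⟩
  have hcard : Fintype.card (G × G) * F p ≥ k ^ 2 * S.card := by
    calc k ^ 2 * S.card = ∑ p : G × G, F p := hsum.symm
      _ ≤ ∑ _p : G × G, F p := Finset.sum_le_sum fun q _ => hpmax q (Finset.mem_univ q)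
      _ = Fintype.card (G × G) * F p := by rw [Finset.sum_const, Finset.card_univ, smul_eq_mul]
  -- real-valued bound: c * k^2 ≤ F p
  have hGpos : (0 : ℝ) < (Fintype.card G : ℝ) ^ 2 := by
    positivity
  have hFp : c * (k : ℝ) ^ 2 ≤ (F p : ℝ) := by
    have h1 : (k : ℝ) ^ 2 * (S.card : ℝ) ≤ ((Fintype.card G : ℝ) ^ 2) * (F p : ℝ) := by
      have h := hcard
      rw [Fintype.card_prod, ← sq] at h
      exact_mod_cast h
    have h2 : (k : ℝ) ^ 2 * (c * (Fintype.card G : ℝ) ^ 2) ≤ (k : ℝ) ^ 2 * (S.card : ℝ) := by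
      apply mul_le_mul_of_nonneg_left hS (by positivity)
    nlinarith
  -- build the spanning set
  set T : Finset G := ((Finset.range k).image fun i => p.1 + i • g) ∪
      ((Finset.range k).image fun j => p.2 + j • g) ∪
      ((Finset.range (2 * k)).image fun l => p.1 + p.2 + l • g) with hT
  refine ⟨T, ?_, ?_⟩
  · calc T.card ≤ (((Finset.range k).image fun i => p.1 + i • g) ∪
          ((Finset.range k).image fun j => p.2 + j • g)).card +
          ((Finset.range (2 * k)).image fun l => p.1 + p.2 + l • g).card :=
        Finset.card_union_le _ _
      _ ≤ (((Finset.range k).image fun i => p.1 + i • g).card +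
          ((Finset.range k).image fun j => p.2 + j • g).card) +
          ((Finset.range (2 * k)).image fun l => p.1 + p.2 + l • g).card := by
        gcongr; exact Finset.card_union_le _ _
      _ ≤ (k + k) + 2 * k := by
        gcongr <;> exact le_trans (Finset.card_image_le) (by simp)
      _ = 4 * k := by ring
  · -- inject the counting set into the filtered set
    have hle : F p ≤ (S.filter fun q => q.1 ∈ T ∧ q.2 ∈ T ∧ q.1 + q.2 ∈ T).card := by
      apply Finset.card_le_card_of_injOn (fun ij => (p.1 + ij.1 • g, p.2 + ij.2 • g))
      · intro ij hij
        simp only [Finset.mem_coe, Finset.mem_filter, Finset.mem_product, Finset.mem_range] at hij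
        obtain ⟨⟨hi, hj⟩, hmem⟩ := hij
        refine Finset.mem_filter.mpr ⟨hmem, ?_, ?_, ?_⟩
        · rw [hT]
          apply Finset.mem_union_left; apply Finset.mem_union_left
          exact Finset.mem_image.mpr ⟨ij.1, Finset.mem_range.mpr hi, rfl⟩
        · rw [hT]
          apply Finset.mem_union_left; apply Finset.mem_union_right
          exact Finset.mem_image.mpr ⟨ij.2, Finset.mem_range.mpr hj, rfl⟩
        · rw [hT]
          apply Finset.mem_union_right
          refine Finset.mem_image.mpr ⟨ij.1 + ij.2, Finset.mem_range.mpr (by omega), ?_⟩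
          rw [add_nsmul]
          show p.1 + p.2 + (ij.1 • g + ij.2 • g) = (p.1 + ij.1 • g) + (p.2 + ij.2 • g)
          abel_nf
      · intro a ha b hb hab
        simp only [Finset.coe_filter, Set.mem_setOf_eq, Finset.mem_product,
          Finset.mem_range] at ha hb
        obtain ⟨⟨ha1, ha2⟩, -⟩ := ha
        obtain ⟨⟨hb1, hb2⟩, -⟩ := hb
        have h1 : a.1 • g = b.1 • g := by
          have := congrArg Prod.fst hab
          simpa using this
        have h2 : a.2 • g = b.2 • g := by
          have := congrArg Prod.snd hab
          simpa using this
        exact Prod.ext (hginj _ _ ha1 hb1 h1) (hginj _ _ ha2 hb2 h2)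
    have hk1 : c * ((k : ℝ) - 1) ^ 2 ≤ c * (k : ℝ) ^ 2 := by
      have hk' : (1 : ℝ) ≤ (k : ℝ) := by exact_mod_cast hk
      nlinarith
    calc c * ((k : ℝ) - 1) ^ 2 ≤ c * (k : ℝ) ^ 2 := hk1
      _ ≤ (F p : ℝ) := hFp
      _ ≤ _ := by exact_mod_cast hle
end

section
/- (Main theorem for abelian groups.) Fix k ≥ 6 and c > 0. There exists N = N(k, c) such that for every finite abelian group G with |G| > N and every S ⊆ G × G with |S| ≥ c|G|², there exists a set of k elements of G spanning at least (c/2^{10})·k² triples (a, b, a+b) with (a, b) ∈ S. -/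
open Finset Pointwise

lemma exists_small_doubling (G : Type) [AddCommGroup G] [Fintype G] [DecidableEq G]
    (r : ℕ) (hr : 1 ≤ r) (hGr : r ≤ Fintype.card G) :
    ∃ X : Finset G, X.card = r ∧ (X + X).card ≤ 4 * r := by
  rcases eq_or_lt_of_le hr with h1 | hr2
  · refine ⟨{0}, by simp [← h1], ?_⟩
    have : ({0} : Finset G) + {0} = {0} := by simp
    rw [this]; simp; omega
  -- r ≥ 2 case
  set n := Fintype.card G with hn
  -- the collection of "subgroup finsets" of card < r
  set P : Finset G → Prop := fun H => (0 : G) ∈ H ∧ (∀ a ∈ H, ∀ b ∈ H, a - b ∈ H) ∧ H.card < r with hP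
  have hPdec : DecidablePred P := fun H => by unfold P; infer_instance
  have hne : (Finset.univ.filter P).Nonempty := by
    refine ⟨{0}, ?_⟩
    simp only [mem_filter, mem_univ, true_and]
    refine ⟨by simp, ?_, by simp; omega⟩
    intro a ha b hb; simp at ha hb; simp [ha, hb]
  obtain ⟨H, hHmem, hHmax⟩ := Finset.exists_max_image (Finset.univ.filter P) (fun H => H.card) hne
  rw [mem_filter] at hHmem
  obtain ⟨-, h0, hsub, hcard⟩ := hHmem
  have hHpos : 0 < H.card := card_pos.2 ⟨0, h0⟩
  have hneg : ∀ a ∈ H, -a ∈ H := fun a ha => by simpa using hsub 0 h0 a ha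
  have hadd : ∀ a ∈ H, ∀ b ∈ H, a + b ∈ H := fun a ha b hb => by
    simpa [sub_neg_eq_add] using hsub a ha (-b) (hneg b hb)
  have hnsmul : ∀ (m : ℕ) (a : G), a ∈ H → m • a ∈ H := by
    intro m a ha
    induction m with
    | zero => simpa using h0
    | succ i ih => rw [succ_nsmul]; exact hadd _ ih _ ha
  -- pick x outside H
  have hHne : H ≠ Finset.univ := by
    intro h; rw [h, card_univ] at hcard; omega
  obtain ⟨x, hx⟩ : ∃ x, x ∉ H := by
    by_contra hc; push_neg at hc
    exact hHne (eq_univ_of_forall hc)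
  -- s := least positive with s • x ∈ H
  have hex : ∃ m, 0 < m ∧ m • x ∈ H := ⟨addOrderOf x, addOrderOf_pos x, by
    rw [addOrderOf_nsmul_eq_zero]; exact h0⟩
  set s := Nat.find hex with hs
  obtain ⟨hspos, hsx⟩ : 0 < s ∧ s • x ∈ H := Nat.find_spec hex
  have hs2 : 2 ≤ s := by
    by_contra h
    push_neg at h
    have hs1 : s = 1 := by omega
    apply hx
    rw [hs1] at hsx
    simpa using hsx
  -- cosets
  set c : ℕ → Finset G := fun i => H.image (fun h => i • x + h) with hc
  have hccard : ∀ i, (c i).card = H.card := fun i =>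
    Finset.card_image_of_injective _ (add_right_injective _)
  have hcdisj : ∀ i < s, ∀ j < s, i ≠ j → Disjoint (c i) (c j) := by
    intro i hi j hj hij
    wlog hlt : i < j generalizing i j
    · exact (this j hj i hi hij.symm (by omega)).symm
    rw [Finset.disjoint_left]
    rintro a ha hb
    simp only [hc, mem_image] at ha hb
    obtain ⟨h1, hh1, rfl⟩ := ha
    obtain ⟨h2, hh2, heq⟩ := hb
    have hji : (j - i) • x ∈ H := by
      have : (j - i) • x = h1 - h2 := by
        have hj' : j = (j - i) + i := by omega
        have := heq
        rw [hj', add_nsmul] at this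
        have : (j - i) • x + (i • x + h2) = i • x + h1 := by rw [← this]; abel
        have h3 : (j - i) • x = i • x + h1 - (i • x + h2) := by rw [← this]; abel
        rw [h3]; abel
      rw [this]; exact hsub _ hh1 _ hh2
    exact (Nat.find_min hex (m := j - i) (by omega)) ⟨by omega, hji⟩
  -- membership helper
  have hmem' : ∀ (m : ℕ) (h : G), h ∈ H → m • x + h ∈ c (m % s) := by
    intro m h hh
    have hdecomp : m • x = (m / s) • (s • x) + (m % s) • x := by
      rw [smul_smul, ← add_nsmul]
      congr 1
      rw [mul_comm]
      exact (Nat.div_add_mod m s).symm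
    have : m • x + h = (m % s) • x + ((m / s) • (s • x) + h) := by rw [hdecomp]; abel
    rw [this]
    exact Finset.mem_image_of_mem _ (hadd _ (hnsmul _ _ hsx) _ hh)
  -- H' = union of all s cosets is a subgroup finset containing H and x
  set H' : Finset G := (range s).biUnion c with hH'
  have hH'card : H'.card = s * H.card := by
    rw [Finset.card_biUnion (fun i hi j hj hij => hcdisj i (mem_range.1 hi) j (mem_range.1 hj) hij)]
    simp [hccard, mul_comm]
  have hmemH' : ∀ (m : ℕ) (h : G), h ∈ H → m • x + h ∈ H' := by
    intro m h hh
    exact Finset.mem_biUnion.2 ⟨m % s, mem_range.2 (Nat.mod_lt _ hspos), hmem' m h hh⟩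
  have hHsub : H ⊆ H' := fun h hh => by simpa using hmemH' 0 h hh
  have hxH' : x ∈ H' := by simpa using hmemH' 1 0 h0
  have hH'sub : ∀ a ∈ H', ∀ b ∈ H', a - b ∈ H' := by
    intro a ha b hb
    simp only [hH', Finset.mem_biUnion, mem_range] at ha hb
    obtain ⟨i, hi, ha⟩ := ha
    obtain ⟨j, hj, hb⟩ := hb
    simp only [hc, mem_image] at ha hb
    obtain ⟨h1, hh1, rfl⟩ := ha
    obtain ⟨h2, hh2, rfl⟩ := hb
    have key : (i • x + h1) - (j • x + h2) = (i + (s - j)) • x + ((h1 - h2) - s • x) := by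
      rw [add_nsmul]
      have : (s - j) • x = s • x - j • x := by
        have : s = (s - j) + j := by omega
        nth_rewrite 2 [this]
        rw [add_nsmul]; abel
      rw [this]; abel
    rw [key]
    exact hmemH' _ _ (hsub _ (hsub _ hh1 _ hh2) _ hsx)
  -- by maximality, H' has card ≥ r
  have hH'big : r ≤ H'.card := by
    by_contra hcon
    push_neg at hcon
    have hmemP : H' ∈ Finset.univ.filter P := by
      rw [mem_filter]
      exact ⟨mem_univ _, hHsub h0, hH'sub, hcon⟩
    have hle := hHmax H' hmemP
    have : H.card < H'.card := Finset.card_lt_card ⟨hHsub, fun hsub' => hx (hsub' hxH')⟩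
    omega
  -- t := least positive with r ≤ t * H.card
  have hext : ∃ m, 0 < m ∧ r ≤ m * H.card := ⟨s, hspos, by rw [← hH'card]; exact hH'big⟩
  set t := Nat.find hext with ht
  obtain ⟨htpos, htr⟩ : 0 < t ∧ r ≤ t * H.card := Nat.find_spec hext
  have hts : t ≤ s := Nat.find_min' hext ⟨hspos, by rw [← hH'card]; exact hH'big⟩
  have htub : t * H.card < r + H.card := by
    rcases eq_or_lt_of_le (Nat.succ_le_of_lt htpos) with h | h
    · have ht1 : t = 1 := h.symm
      rw [ht1, one_mul]; omega
    · have hmin := Nat.find_min hext (m := t - 1) (by omega)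
      push_neg at hmin
      have hlt : (t - 1) * H.card < r := hmin (by omega)
      have hsm : (t - 1) * H.card = t * H.card - H.card := Nat.sub_one_mul t H.card
      have hge : H.card ≤ t * H.card := Nat.le_mul_of_pos_left _ htpos
      omega
  -- X₀ = first t cosets
  set X₀ : Finset G := (range t).biUnion c with hX₀
  have hX₀card : X₀.card = t * H.card := by
    rw [Finset.card_biUnion (fun i hi j hj hij =>
      hcdisj i (lt_of_lt_of_le (mem_range.1 hi) hts) j (lt_of_lt_of_le (mem_range.1 hj) hts) hij)]
    simp [hccard, mul_comm]
  have hX₀sum : X₀ + X₀ ⊆ (range (2 * t - 1)).biUnion c := by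
    intro a ha
    rw [Finset.mem_add] at ha
    obtain ⟨u, hu, v, hv, rfl⟩ := ha
    simp only [hX₀, Finset.mem_biUnion, mem_range] at hu hv
    obtain ⟨i, hi, hu⟩ := hu
    obtain ⟨j, hj, hv⟩ := hv
    simp only [hc, mem_image] at hu hv
    obtain ⟨h1, hh1, rfl⟩ := hu
    obtain ⟨h2, hh2, rfl⟩ := hv
    refine Finset.mem_biUnion.2 ⟨i + j, mem_range.2 (by omega), ?_⟩
    simp only [hc, mem_image]
    exact ⟨h1 + h2, hadd _ hh1 _ hh2, by rw [add_nsmul]; abel⟩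
  have hYcard : ((range (2 * t - 1)).biUnion c).card ≤ 4 * r := by
    calc ((range (2 * t - 1)).biUnion c).card ≤ ∑ i ∈ range (2 * t - 1), (c i).card :=
          Finset.card_biUnion_le
      _ = (2 * t - 1) * H.card := by simp [hccard, mul_comm]
      _ ≤ 4 * r := by
          have h1 : t * H.card < r + H.card := htub
          have h2 : H.card < r := hcard
          have h3 : (2 * t - 1) * H.card ≤ 2 * (t * H.card) := by
            rw [← mul_assoc]
            exact Nat.mul_le_mul_right _ (by omega)
          omega
  obtain ⟨X, hXsub, hXcard⟩ := Finset.exists_subset_card_eq (show r ≤ X₀.card by omega)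
  refine ⟨X, hXcard, ?_⟩
  calc (X + X).card ≤ ((range (2 * t - 1)).biUnion c).card :=
        Finset.card_le_card (subset_trans (Finset.add_subset_add hXsub hXsub) hX₀sum)
    _ ≤ 4 * r := hYcard


/-- main theorem, abelian case: for `k ≥ 6` and `c > 0` there is `N` such
that every finite abelian group `G` with `|G| > N` and every `S ⊆ G × G` with
`|S| ≥ c·|G|²` admits a set of `k` elements of `G` spanning at least `(c/2^10)·k²` triples
`(a, b, a+b)` with `(a, b) ∈ S`. -/
theorem stmt_15 (k : ℕ) (hk : 6 ≤ k) (c : ℝ) (hc : 0 < c) :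
    ∃ N : ℕ, ∀ (G : Type) [AddCommGroup G] [Fintype G] [DecidableEq G],
      N < Fintype.card G →
      ∀ S : Finset (G × G), c * (Fintype.card G : ℝ) ^ 2 ≤ S.card →
        ∃ T : Finset G, T.card = k ∧
          (c / 2 ^ 10) * (k : ℝ) ^ 2 ≤
            ((S.filter fun p => p.1 ∈ T ∧ p.2 ∈ T ∧ p.1 + p.2 ∈ T).card : ℝ) := by
  set r := k / 6 with hrdef
  have hr1 : 1 ≤ r := by omega
  have hr6 : 6 * r ≤ k := by omega
  have hk32 : k ≤ 32 * r := by omega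
  refine ⟨k, ?_⟩
  intro G _ _ _ hN S hS
  set n := Fintype.card G with hn
  have hnpos : 0 < n := by omega
  obtain ⟨X, hXcard, hXX⟩ := exists_small_doubling G r hr1 (by omega)
  -- the shifted count
  set F : G × G → ℕ := fun p => ((X ×ˢ X).filter (fun q => p + q ∈ S)).card with hF
  -- total sum over all shifts
  have hsum : ∑ p : G × G, F p = r ^ 2 * S.card := by
    have h1 : ∀ p : G × G, F p = ∑ q ∈ X ×ˢ X, if p + q ∈ S then 1 else 0 := fun p =>
      Finset.card_filter _ _
    calc ∑ p : G × G, F p = ∑ p : G × G, ∑ q ∈ X ×ˢ X, if p + q ∈ S then 1 else 0 := by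
          simp only [h1]
      _ = ∑ q ∈ X ×ˢ X, ∑ p : G × G, (if p + q ∈ S then 1 else 0) := Finset.sum_comm
      _ = ∑ q ∈ X ×ˢ X, S.card := by
          refine Finset.sum_congr rfl (fun q _ => ?_)
          have := Fintype.sum_equiv (Equiv.addRight q)
            (fun p : G × G => if p + q ∈ S then 1 else 0)
            (fun p : G × G => if p ∈ S then 1 else 0)
            (fun p => by simp [Equiv.addRight])
          rw [this]
          rw [← Finset.card_filter]
          simp
      _ = r ^ 2 * S.card := by
          rw [Finset.sum_const, Finset.card_product, hXcard, smul_eq_mul]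
          ring
  -- find a good shift
  have hmax : ∃ p : G × G, r ^ 2 * S.card ≤ n ^ 2 * F p := by
    have hne : (Finset.univ : Finset (G × G)).Nonempty := univ_nonempty
    have hle : ∑ _p : G × G, r ^ 2 * S.card ≤ ∑ p : G × G, n ^ 2 * F p := by
      have hL : ∑ _p : G × G, r ^ 2 * S.card = n ^ 2 * (r ^ 2 * S.card) := by
        rw [Finset.sum_const, card_univ, Fintype.card_prod, ← hn, smul_eq_mul]; ring
      have hR : ∑ p : G × G, n ^ 2 * F p = n ^ 2 * (r ^ 2 * S.card) := by
        rw [← Finset.mul_sum, hsum]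
      rw [hL, hR]
    obtain ⟨p, _, hp⟩ := Finset.exists_le_of_sum_le hne hle
    exact ⟨p, hp⟩
  obtain ⟨p₀, hp₀⟩ := hmax
  -- real bound : (c/2^10) k^2 ≤ F p₀
  have hreal : (c / 2 ^ 10) * (k : ℝ) ^ 2 ≤ (F p₀ : ℝ) := by
    have h1 : (r : ℝ) ^ 2 * S.card ≤ (n : ℝ) ^ 2 * F p₀ := by
      have := hp₀
      exact_mod_cast (by exact_mod_cast hp₀ : ((r ^ 2 * S.card : ℕ) : ℝ) ≤ ((n ^ 2 * F p₀ : ℕ) : ℝ))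
    have h2 : c * (n : ℝ) ^ 2 * (r : ℝ) ^ 2 ≤ (n : ℝ) ^ 2 * F p₀ := by
      calc c * (n : ℝ) ^ 2 * (r : ℝ) ^ 2 ≤ (S.card : ℝ) * (r : ℝ) ^ 2 := by
            apply mul_le_mul_of_nonneg_right hS (by positivity)
        _ = (r : ℝ) ^ 2 * S.card := by ring
        _ ≤ _ := h1
    have hn2 : (0 : ℝ) < (n : ℝ) ^ 2 := by positivity
    have h3 : c * (r : ℝ) ^ 2 ≤ (F p₀ : ℝ) := by
      have := (mul_le_mul_iff_right₀ hn2).mp (by linarith : (n:ℝ)^2 * (c * (r:ℝ)^2) ≤ (n:ℝ)^2 * F p₀)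
      linarith
    have h4 : (k : ℝ) ≤ 32 * (r : ℝ) := by exact_mod_cast hk32
    have h5 : (k : ℝ) ^ 2 ≤ 1024 * (r : ℝ) ^ 2 := by nlinarith [Nat.cast_nonneg (α := ℝ) k, Nat.cast_nonneg (α := ℝ) r]
    calc (c / 2 ^ 10) * (k : ℝ) ^ 2 ≤ (c / 2 ^ 10) * (1024 * (r : ℝ) ^ 2) := by
          apply mul_le_mul_of_nonneg_left h5 (by positivity)
      _ = c * (r : ℝ) ^ 2 := by ring
      _ ≤ (F p₀ : ℝ) := h3
  -- build T
  set T₀ : Finset G := X.image (p₀.1 + ·) ∪ X.image (p₀.2 + ·) ∪ (X + X).image ((p₀.1 + p₀.2) + ·)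
    with hT₀
  have hT₀card : T₀.card ≤ k := by
    calc T₀.card ≤ (X.image (p₀.1 + ·) ∪ X.image (p₀.2 + ·)).card + ((X + X).image ((p₀.1 + p₀.2) + ·)).card :=
          Finset.card_union_le _ _
      _ ≤ (X.image (p₀.1 + ·)).card + (X.image (p₀.2 + ·)).card + ((X + X).image ((p₀.1 + p₀.2) + ·)).card := by
          have := Finset.card_union_le (X.image (p₀.1 + ·)) (X.image (p₀.2 + ·))
          omega
      _ ≤ r + r + 4 * r := by
          have e1 := Finset.card_image_le (s := X) (f := (p₀.1 + ·))
          have e2 := Finset.card_image_le (s := X) (f := (p₀.2 + ·))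
          have e3 := Finset.card_image_le (s := X + X) (f := ((p₀.1 + p₀.2) + ·))
          omega
      _ ≤ k := by omega
  obtain ⟨T, hT₀T, hTcard⟩ := Finset.exists_superset_card_eq hT₀card (by omega)
  refine ⟨T, hTcard, ?_⟩
  -- inject the counted pairs into the filtered set
  have hinj : F p₀ ≤ (S.filter fun p => p.1 ∈ T ∧ p.2 ∈ T ∧ p.1 + p.2 ∈ T).card := by
    apply Finset.card_le_card_of_injOn (fun q => p₀ + q)
    · intro q hq
      rw [Finset.mem_coe, Finset.mem_filter] at hq ⊢
      obtain ⟨hqmem, hqS⟩ := hq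
      rw [Finset.mem_product] at hqmem
      refine ⟨hqS, ?_, ?_, ?_⟩
      · exact hT₀T (Finset.mem_union_left _ (Finset.mem_union_left _
          (Finset.mem_image_of_mem _ hqmem.1)))
      · exact hT₀T (Finset.mem_union_left _ (Finset.mem_union_right _
          (Finset.mem_image_of_mem _ hqmem.2)))
      · have : (p₀ + q).1 + (p₀ + q).2 = (p₀.1 + p₀.2) + (q.1 + q.2) := by
          simp [Prod.fst_add, Prod.snd_add]; abel
        rw [this]
        exact hT₀T (Finset.mem_union_right _
          (Finset.mem_image_of_mem _ (Finset.add_mem_add hqmem.1 hqmem.2)))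
    · intro a _ b _ hab
      exact add_left_cancel hab
  calc (c / 2 ^ 10) * (k : ℝ) ^ 2 ≤ (F p₀ : ℝ) := hreal
    _ ≤ _ := by exact_mod_cast hinj
end

section
/- (Main theorem.) Fix k ≥ 6. There exists N = N(k) such that for every finite group G with |G| > N and every S ⊆ G × G with |S| ≥ c|G|² for some c > 0, there exists a set of k elements of G which spans at least (c/2^{10})·k² triples (a, b, ab) with (a, b) ∈ S. -/
open Finset
open scoped Pointwise


lemma coset_union_doubling {G : Type} [Group G] [Fintype G] [DecidableEq G]
    (H : Subgroup G) [DecidablePred (· ∈ H)] (x : G) (hx : x ∈ (Subgroup.normalizer (H : Set G)))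
    (p s : ℕ) (hs1 : 1 ≤ s) (hsp : s ≤ p)
    (hxj : ∀ j : ℕ, 0 < j → j < p → x ^ j ∉ H) :
    ∃ B : Finset G,
      B.card = s * (Finset.univ.filter (· ∈ H)).card ∧
      (B * B).card ≤ (2 * s - 1) * (Finset.univ.filter (· ∈ H)).card := by
  classical
  set HF : Finset G := Finset.univ.filter (· ∈ H) with hHF
  have hmemHF : ∀ g : G, g ∈ HF ↔ g ∈ H := by intro g; simp [hHF]
  have hconj : ∀ (t : ℕ) (h : G), h ∈ H → (x ^ t)⁻¹ * h * x ^ t ∈ H := by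
    intro t h hh
    have hxt : (x ^ t)⁻¹ ∈ (Subgroup.normalizer (H : Set G)) := inv_mem (pow_mem hx t)
    have := (Subgroup.mem_normalizer_iff.mp hxt h).mp hh
    simpa using this
  set B : Finset G := (Finset.range s).biUnion (fun t => HF.image (fun h => x ^ t * h)) with hB
  have hmemB : ∀ g : G, g ∈ B ↔ ∃ t < s, ∃ h ∈ H, g = x ^ t * h := by
    intro g
    simp only [hB, Finset.mem_biUnion, Finset.mem_range, Finset.mem_image, hmemHF]
    constructor
    · rintro ⟨t, ht, h, hh, rfl⟩; exact ⟨t, ht, h, hh, rfl⟩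
    · rintro ⟨t, ht, h, hh, rfl⟩; exact ⟨t, ht, h, hh, rfl⟩
  -- distinctness of cosets
  have hdist : ∀ t t' : ℕ, t < s → t' < s → t ≠ t' →
      Disjoint (HF.image (fun h => x ^ t * h)) (HF.image (fun h => x ^ t' * h)) := by
    intro t t' ht ht' hne
    wlog hlt : t < t' generalizing t t'
    · exact (this t' t ht' ht hne.symm (by omega)).symm
    rw [Finset.disjoint_left]
    rintro g hg hg'
    simp only [Finset.mem_image, hmemHF] at hg hg'
    obtain ⟨h, hh, rfl⟩ := hg
    obtain ⟨h', hh', he⟩ := hg'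
    have hxmem : x ^ (t' - t) ∈ H := by
      have : x ^ t' * h' = x ^ t * h := he
      have h1 : x ^ (t' - t) = (x ^ t)⁻¹ * x ^ t' := by
        rw [← pow_sub_mul_pow x (Nat.le_of_lt hlt)]
        group
      have h2 : (x ^ t)⁻¹ * x ^ t' = h * h'⁻¹ := by
        have := congrArg (fun g => (x ^ t)⁻¹ * g * h'⁻¹) this
        simpa [mul_assoc] using this
      rw [h1, h2]
      exact mul_mem hh (inv_mem hh')
    exact hxj (t' - t) (by omega) (by omega) hxmem
  have hcard : B.card = s * HF.card := by
    rw [hB, Finset.card_biUnion]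
    · have : ∀ t ∈ Finset.range s, (HF.image (fun h => x ^ t * h)).card = HF.card := by
        intro t _
        exact Finset.card_image_of_injective _ (mul_right_injective _)
      rw [Finset.sum_congr rfl this, Finset.sum_const, Finset.card_range, smul_eq_mul]
    · intro t ht t' ht' hne
      exact hdist t t' (Finset.mem_range.mp ht) (Finset.mem_range.mp ht') hne
  refine ⟨B, hcard, ?_⟩
  have hsub : B * B ⊆ (Finset.range (2 * s - 1)).biUnion (fun t => HF.image (fun h => x ^ t * h)) := by
    intro g hg
    rw [Finset.mem_mul] at hg
    obtain ⟨b1, hb1, b2, hb2, rfl⟩ := hg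
    obtain ⟨t, ht, h, hh, rfl⟩ := (hmemB b1).mp hb1
    obtain ⟨t', ht', h', hh', rfl⟩ := (hmemB b2).mp hb2
    simp only [Finset.mem_biUnion, Finset.mem_range, Finset.mem_image, hmemHF]
    refine ⟨t + t', by omega, ((x ^ t')⁻¹ * h * x ^ t') * h', mul_mem (hconj t' h hh) hh', ?_⟩
    rw [pow_add]
    group
  calc (B * B).card ≤ _ := Finset.card_le_card hsub
    _ ≤ ∑ t ∈ Finset.range (2 * s - 1), (HF.image (fun h => x ^ t * h)).card :=
        Finset.card_biUnion_le
    _ ≤ ∑ _t ∈ Finset.range (2 * s - 1), HF.card := by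
        exact Finset.sum_le_sum fun t _ => Finset.card_image_le
    _ = (2 * s - 1) * HF.card := by rw [Finset.sum_const, Finset.card_range, smul_eq_mul]

lemma exists_small_doubling_s16 (m : ℕ) (hm : 2 ≤ m) (G : Type) [Group G] [Fintype G] [DecidableEq G]
    (hG : m ^ m ≤ Fintype.card G) :
    ∃ B : Finset G, m ≤ B.card ∧ B.card ≤ 2 * m ∧ (B * B).card ≤ 4 * m := by
  classical
  by_cases h1 : ∃ g : G, m ≤ orderOf g
  · obtain ⟨g, hg⟩ := h1
    refine ⟨(Finset.range m).image (g ^ ·), ?_, ?_, ?_⟩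
    · have : ((Finset.range m).image (g ^ ·)).card = m := by
        rw [Finset.card_image_of_injOn, Finset.card_range]
        have : (↑(Finset.range m) : Set ℕ) ⊆ Set.Iio (orderOf g) := by
          rw [Finset.coe_range]
          exact Set.Iio_subset_Iio hg
        exact pow_injOn_Iio_orderOf.mono this
      omega
    · calc ((Finset.range m).image (g ^ ·)).card ≤ (Finset.range m).card :=
            Finset.card_image_le
        _ = m := Finset.card_range _
        _ ≤ 2 * m := by omega
    · have hsub : (Finset.range m).image (g ^ ·) * (Finset.range m).image (g ^ ·)
          ⊆ (Finset.range (2 * m - 1)).image (g ^ ·) := by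
        intro z hz
        rw [Finset.mem_mul] at hz
        obtain ⟨b1, hb1, b2, hb2, rfl⟩ := hz
        simp only [Finset.mem_image, Finset.mem_range] at hb1 hb2 ⊢
        obtain ⟨t, ht, rfl⟩ := hb1
        obtain ⟨t', ht', rfl⟩ := hb2
        exact ⟨t + t', by omega, pow_add g t t'⟩
      calc _ ≤ ((Finset.range (2 * m - 1)).image (g ^ ·)).card := Finset.card_le_card hsub
        _ ≤ (Finset.range (2 * m - 1)).card := Finset.card_image_le
        _ = 2 * m - 1 := Finset.card_range _
        _ ≤ 4 * m := by omega
  · push_neg at h1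
    set n := Fintype.card G with hn
    have hn0 : n ≠ 0 := Fintype.card_ne_zero
    -- find a big prime power dividing n
    have hpa : ∃ p a : ℕ, p.Prime ∧ m ≤ p ^ a ∧ p ^ a ∣ n := by
      by_contra hcon
      push_neg at hcon
      have hfac : n.factorization.prod (· ^ ·) = n := Nat.factorization_prod_pow_eq_self hn0
      have hbound : ∀ p ∈ n.primeFactors, p ^ n.factorization p ≤ m - 1 := by
        intro p hp
        have hprime : p.Prime := Nat.prime_of_mem_primeFactors hp
        have hdvd : p ^ n.factorization p ∣ n := Nat.ordProj_dvd n p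
        by_contra hcc
        push_neg at hcc
        exact hcon p (n.factorization p) hprime (by omega) hdvd
      have hsubset : n.primeFactors ⊆ Finset.range m := by
        intro p hp
        have hprime : p.Prime := Nat.prime_of_mem_primeFactors hp
        have hdvd : p ^ 1 ∣ n := by simpa using Nat.dvd_of_mem_primeFactors hp
        by_contra hcc
        rw [Finset.mem_range, not_lt] at hcc
        exact hcon p 1 hprime (by simpa using hcc) hdvd
      have hle : n ≤ (m - 1) ^ m := by
        calc n = ∏ p ∈ n.primeFactors, p ^ n.factorization p := by
              conv_lhs => rw [← hfac]
              exact Nat.prod_factorization_eq_prod_primeFactors (· ^ ·)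
          _ ≤ ∏ _p ∈ n.primeFactors, (m - 1) := Finset.prod_le_prod' hbound
          _ = (m - 1) ^ n.primeFactors.card := by rw [Finset.prod_const]
          _ ≤ (m - 1) ^ m := Nat.pow_le_pow_right (by omega)
                (le_trans (Finset.card_le_card hsubset) (by simp))
      have hlt : (m - 1) ^ m < m ^ m := Nat.pow_lt_pow_left (by omega) (by omega)
      omega
    obtain ⟨p, a0, hp, hma, hdvd⟩ := hpa
    haveI : Fact p.Prime := ⟨hp⟩
    -- minimal such a
    have hex : ∃ a : ℕ, m ≤ p ^ a ∧ p ^ a ∣ n := ⟨a0, hma, hdvd⟩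
    set a := Nat.find hex with ha
    obtain ⟨hma', hdvd'⟩ := Nat.find_spec hex
    rw [← ha] at hma' hdvd'
    have ha1 : 1 ≤ a := by
      rcases Nat.eq_zero_or_pos a with h | h
      · rw [h, pow_zero] at hma'; omega
      · exact h
    have hqdvd : p ^ (a - 1) ∣ n := dvd_trans (pow_dvd_pow p (by omega)) hdvd'
    have hqlt : p ^ (a - 1) < m := by
      by_contra hcon
      push_neg at hcon
      have := Nat.find_min hex (m := a - 1) (by omega)
      exact this ⟨hcon, hqdvd⟩
    set q := p ^ (a - 1) with hq
    have hq1 : 1 ≤ q := Nat.pow_pos hp.pos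
    have hpq : m ≤ p * q := by
      have : p * q = p ^ a := by
        rw [hq, ← pow_succ']
        congr 1
        omega
      omega
    -- get subgroup of order q
    have hdvdN : p ^ (a - 1) ∣ Nat.card G := by rwa [Nat.card_eq_fintype_card]
    obtain ⟨H, hH⟩ := Sylow.exists_subgroup_card_pow_prime p hdvdN
    have hdvdN' : p ^ ((a - 1) + 1) ∣ Nat.card G := by
      rw [Nat.card_eq_fintype_card]
      have : (a - 1) + 1 = a := by omega
      rw [this]
      exact hdvd'
    have hquo : p ∣ Nat.card ((Subgroup.normalizer (H : Set G)) ⧸ H.subgroupOf (Subgroup.normalizer (H : Set G))) :=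
      Sylow.prime_dvd_card_quotient_normalizer hdvdN' hH
    obtain ⟨ξ, hξ⟩ := exists_prime_orderOf_dvd_card' p hquo
    obtain ⟨y, rfl⟩ := QuotientGroup.mk'_surjective (H.subgroupOf (Subgroup.normalizer (H : Set G))) ξ
    set x : G := (y : G) with hxdef
    have hx : x ∈ (Subgroup.normalizer (H : Set G)) := y.2
    have hxj : ∀ j : ℕ, 0 < j → j < p → x ^ j ∉ H := by
      intro j hj1 hj2 hmem
      have hyj : (QuotientGroup.mk' (H.subgroupOf (Subgroup.normalizer (H : Set G))) y) ^ j = 1 := by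
        rw [← map_pow, QuotientGroup.mk'_apply, QuotientGroup.eq_one_iff]
        simpa [Subgroup.mem_subgroupOf] using hmem
      have := orderOf_dvd_of_pow_eq_one hyj
      rw [hξ] at this
      exact absurd (Nat.le_of_dvd hj1 this) (by omega)
    -- card of the filter
    have hHFcard : (Finset.univ.filter (· ∈ H)).card = q := by
      have h2 : Nat.card H = (Finset.univ.filter (· ∈ H)).card := by
        rw [Nat.card_eq_fintype_card]
        exact Fintype.card_subtype _
      omega
    -- choose s
    set d := m / q with hd
    set s := min p (d + 1) with hs
    have hs1 : 1 ≤ s := le_min hp.pos (Nat.succ_le_succ (Nat.zero_le d))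
    have hsp : s ≤ p := min_le_left _ _
    obtain ⟨B, hBcard, hBB⟩ := coset_union_doubling H x hx p s hs1 hsp hxj
    rw [hHFcard] at hBcard hBB
    -- numeric facts
    have hdm : q * d + m % q = m := Nat.div_add_mod m q
    have hmod : m % q < q := Nat.mod_lt _ (by omega)
    have hsd : s ≤ d + 1 := min_le_right _ _
    have hsq2m : s * q ≤ 2 * m := by
      calc s * q ≤ (d + 1) * q := Nat.mul_le_mul_right q hsd
        _ = q * d + q := by ring
        _ ≤ m + m := by omega
        _ = 2 * m := by ring
    have hmsq : m ≤ s * q := by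
      rcases le_or_gt p (d + 1) with h | h
      · have hsp' : s = p := min_eq_left h
        rw [hsp']
        omega
      · have hsd' : s = d + 1 := min_eq_right (by omega)
        rw [hsd']
        have : (d + 1) * q = q * d + q := by ring
        omega
    refine ⟨B, by omega, by omega, ?_⟩
    have : (2 * s - 1) * q ≤ 2 * (s * q) := by
      have h2 : (2 * s - 1) ≤ 2 * s := by omega
      calc (2 * s - 1) * q ≤ 2 * s * q := Nat.mul_le_mul_right q h2
        _ = 2 * (s * q) := by ring
    omega

section Counting

variable {G : Type} [Group G] [Fintype G] [DecidableEq G]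

lemma count_left (B : Finset G) (a : G) :
    (Finset.univ.filter fun u : G => a ∈ B.image (u * ·)).card = B.card := by
  have h : (Finset.univ.filter fun u : G => a ∈ B.image (u * ·))
      = B.image (fun b => a * b⁻¹) := by
    ext u
    simp only [Finset.mem_filter, Finset.mem_univ, true_and, Finset.mem_image]
    constructor
    · rintro ⟨b, hb, hub⟩
      exact ⟨b, hb, by rw [← hub]; group⟩
    · rintro ⟨b, hb, rfl⟩
      exact ⟨b, hb, by group⟩
  rw [h, Finset.card_image_of_injective]
  intro b1 b2 h
  have := mul_left_cancel h
  exact inv_injective this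

lemma count_right (B : Finset G) (b : G) :
    (Finset.univ.filter fun v : G => b ∈ B.image (· * v)).card = B.card := by
  have h : (Finset.univ.filter fun v : G => b ∈ B.image (· * v))
      = B.image (fun c => c⁻¹ * b) := by
    ext v
    simp only [Finset.mem_filter, Finset.mem_univ, true_and, Finset.mem_image]
    constructor
    · rintro ⟨c, hc, hvc⟩
      exact ⟨c, hc, by rw [← hvc]; group⟩
    · rintro ⟨c, hc, rfl⟩
      exact ⟨c, hc, by group⟩
  rw [h, Finset.card_image_of_injective]
  intro c1 c2 h
  have := mul_right_cancel h
  exact inv_injective this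

lemma sum_counts (S : Finset (G × G)) (B : Finset G) :
    ∑ w : G × G, (S.filter fun p =>
        p.1 ∈ B.image (w.1 * ·) ∧ p.2 ∈ B.image (· * w.2)).card
      = S.card * (B.card * B.card) := by
  classical
  have h1 : ∀ w : G × G, (S.filter fun p =>
      p.1 ∈ B.image (w.1 * ·) ∧ p.2 ∈ B.image (· * w.2)).card
      = ∑ p ∈ S, if (p.1 ∈ B.image (w.1 * ·) ∧ p.2 ∈ B.image (· * w.2)) then 1 else 0 := by
    intro w
    rw [Finset.card_filter]
  rw [Finset.sum_congr rfl fun w _ => h1 w, Finset.sum_comm]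
  have h2 : ∀ p : G × G, (∑ w : G × G,
      if (p.1 ∈ B.image (w.1 * ·) ∧ p.2 ∈ B.image (· * w.2)) then 1 else 0)
      = B.card * B.card := by
    intro p
    rw [Fintype.sum_prod_type]
    have h3 : ∀ u : G, (∑ v : G,
        if (p.1 ∈ B.image (u * ·) ∧ p.2 ∈ B.image (· * v)) then (1:ℕ) else 0)
        = if p.1 ∈ B.image (u * ·) then B.card else 0 := by
      intro u
      by_cases h : p.1 ∈ B.image (u * ·)
      · simp only [h, true_and, if_true]
        rw [← count_right B p.2, Finset.card_filter]
      · simp only [h, false_and, if_false, Finset.sum_const_zero]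
    rw [Finset.sum_congr rfl fun u _ => h3 u]
    rw [← Finset.sum_filter, Finset.sum_const, count_left B p.1, smul_eq_mul]
  rw [Finset.sum_congr rfl fun p _ => h2 p, Finset.sum_const, smul_eq_mul]

end Counting


/-- main theorem: for `k ≥ 6` there is `N = N(k)` such that every finite
group `G` with `|G| > N` and every `S ⊆ G × G` with `|S| ≥ c·|G|²` for some `c > 0`
admits a set of `k` elements of `G` spanning at least `(c/2^10)·k²` triples `(a, b, ab)`
with `(a, b) ∈ S`. -/
theorem stmt_16 (k : ℕ) (hk : 6 ≤ k) :
    ∃ N : ℕ, ∀ (G : Type) [Group G] [Fintype G] [DecidableEq G],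
      N < Fintype.card G →
      ∀ (c : ℝ), 0 < c →
      ∀ S : Finset (G × G), c * (Fintype.card G : ℝ) ^ 2 ≤ S.card →
        ∃ T : Finset G, T.card = k ∧
          (c / 2 ^ 10) * (k : ℝ) ^ 2 ≤
            ((S.filter fun p => p.1 ∈ T ∧ p.2 ∈ T ∧ p.1 * p.2 ∈ T).card : ℝ) := by
  classical
  refine ⟨max k ((k / 8) ^ (k / 8)), ?_⟩
  intro G _ _ _ hcard c hc S hS
  set n := Fintype.card G with hn
  have hkn : k ≤ n := by
    have := le_max_left k ((k / 8) ^ (k / 8))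
    omega
  have hn1 : 1 ≤ n := by omega
  have hSn : (S.card : ℝ) ≤ (n : ℝ) ^ 2 := by
    have h1 : S.card ≤ n * n := by
      calc S.card ≤ (Finset.univ : Finset (G × G)).card := Finset.card_le_card (Finset.subset_univ S)
        _ = Fintype.card (G × G) := Finset.card_univ
        _ = n * n := Fintype.card_prod G G
    calc (S.card : ℝ) ≤ ((n * n : ℕ) : ℝ) := by exact_mod_cast h1
      _ = (n : ℝ) ^ 2 := by push_cast; ring
  have hc1 : c ≤ 1 := by
    have hnpos : (0:ℝ) < (n:ℝ) ^ 2 := by positivity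
    nlinarith [le_trans hS hSn]
  have hSpos : 0 < S.card := by
    by_contra hcon
    push_neg at hcon
    have h0 : S.card = 0 := by omega
    rw [h0] at hS
    push_cast at hS
    have hnpos : (0:ℝ) < (n:ℝ) ^ 2 := by positivity
    nlinarith
  by_cases hk32 : k ≤ 32
  · -- small k: a single spanned pair suffices
    obtain ⟨⟨a, b⟩, hab⟩ := Finset.card_pos.mp hSpos
    have hT0 : ({a, b, a * b} : Finset G).card ≤ k := by
      calc ({a, b, a * b} : Finset G).card ≤ 3 := by
            exact (Finset.card_insert_le _ _).trans
              (Nat.succ_le_succ ((Finset.card_insert_le _ _).trans (by simp)))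
        _ ≤ k := by omega
    obtain ⟨T, hsubT, hTcard⟩ := Finset.exists_superset_card_eq hT0 hkn
    refine ⟨T, hTcard, ?_⟩
    have hmem : (a, b) ∈ S.filter fun p => p.1 ∈ T ∧ p.2 ∈ T ∧ p.1 * p.2 ∈ T := by
      rw [Finset.mem_filter]
      exact ⟨hab, hsubT (by simp), hsubT (by simp), hsubT (by simp)⟩
    have hone : 1 ≤ (S.filter fun p => p.1 ∈ T ∧ p.2 ∈ T ∧ p.1 * p.2 ∈ T).card :=
      Finset.card_pos.mpr ⟨(a, b), hmem⟩
    have hone' : (1 : ℝ) ≤ ((S.filter fun p => p.1 ∈ T ∧ p.2 ∈ T ∧ p.1 * p.2 ∈ T).card : ℝ) := by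
      exact_mod_cast hone
    have hk2 : (k : ℝ) ^ 2 ≤ 1024 := by
      have : (k : ℝ) ≤ 32 := by exact_mod_cast hk32
      nlinarith [Nat.cast_nonneg (α := ℝ) k]
    nlinarith
  · push_neg at hk32
    set m := k / 8 with hm
    have hm2 : 2 ≤ m := by omega
    have hGm : m ^ m ≤ n := by
      have := le_max_right k ((k / 8) ^ (k / 8))
      rw [← hm] at this
      omega
    obtain ⟨B, hBm, hB2m, hBB⟩ := exists_small_doubling_s16 m hm2 G hGm
    -- averaging over translates
    set f : G × G → ℕ := fun w => (S.filter fun p =>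
        p.1 ∈ B.image (w.1 * ·) ∧ p.2 ∈ B.image (· * w.2)).card with hf
    have hsum : ∑ w : G × G, f w = S.card * (B.card * B.card) := sum_counts S B
    have hpigeon : ∃ w : G × G, S.card * (B.card * B.card) ≤ n ^ 2 * f w := by
      by_contra hcon
      push_neg at hcon
      have hne : (Finset.univ : Finset (G × G)).Nonempty := Finset.univ_nonempty
      have hlt : ∑ w : G × G, n ^ 2 * f w < ∑ _w : G × G, S.card * (B.card * B.card) :=
        Finset.sum_lt_sum_of_nonempty hne fun w _ => hcon w
      rw [← Finset.mul_sum, hsum, Finset.sum_const, Finset.card_univ, Fintype.card_prod,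
        smul_eq_mul] at hlt
      have h2 : n * n = n ^ 2 := by ring
      rw [h2] at hlt
      exact absurd hlt (lt_irrefl _)
    obtain ⟨⟨u, v⟩, hw⟩ := hpigeon
    -- build T
    set T0 : Finset G := B.image (u * ·) ∪ B.image (· * v)
        ∪ (B * B).image (fun q => u * q * v) with hT0def
    have hT0 : T0.card ≤ k := by
      have h8 : 8 * m ≤ k := by omega
      calc T0.card ≤ (B.image (u * ·) ∪ B.image (· * v)).card
            + ((B * B).image (fun q => u * q * v)).card := Finset.card_union_le _ _
        _ ≤ (B.image (u * ·)).card + (B.image (· * v)).card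
            + ((B * B).image (fun q => u * q * v)).card := by
            have := Finset.card_union_le (B.image (u * ·)) (B.image (· * v))
            omega
        _ ≤ B.card + B.card + (B * B).card := by
            have h1 := Finset.card_image_le (s := B) (f := (u * ·))
            have h2 := Finset.card_image_le (s := B) (f := (· * v))
            have h3 := Finset.card_image_le (s := B * B) (f := fun q => u * q * v)
            omega
        _ ≤ 2 * m + 2 * m + 4 * m := by omega
        _ ≤ k := by omega
    obtain ⟨T, hsubT, hTcard⟩ := Finset.exists_superset_card_eq hT0 hkn
    refine ⟨T, hTcard, ?_⟩
    have hmono : (S.filter fun p => p.1 ∈ B.image (u * ·) ∧ p.2 ∈ B.image (· * v))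
        ⊆ S.filter fun p => p.1 ∈ T ∧ p.2 ∈ T ∧ p.1 * p.2 ∈ T := by
      intro p hp
      rw [Finset.mem_filter] at hp ⊢
      obtain ⟨hpS, h1, h2⟩ := hp
      refine ⟨hpS, ?_, ?_, ?_⟩
      · exact hsubT (Finset.mem_union_left _ (Finset.mem_union_left _ h1))
      · exact hsubT (Finset.mem_union_left _ (Finset.mem_union_right _ h2))
      · apply hsubT
        apply Finset.mem_union_right
        rw [Finset.mem_image] at h1 h2 ⊢
        obtain ⟨b1, hb1, hb1e⟩ := h1
        obtain ⟨b2, hb2, hb2e⟩ := h2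
        refine ⟨b1 * b2, Finset.mul_mem_mul hb1 hb2, ?_⟩
        rw [← hb1e, ← hb2e]
        group
    have hcount : f (u, v) ≤ (S.filter fun p => p.1 ∈ T ∧ p.2 ∈ T ∧ p.1 * p.2 ∈ T).card :=
      Finset.card_le_card hmono
    -- real arithmetic
    have hwR : (S.card : ℝ) * (B.card * B.card) ≤ (n : ℝ) ^ 2 * f (u, v) := by
      exact_mod_cast hw
    have hBmR : (m : ℝ) ≤ B.card := by exact_mod_cast hBm
    have hnposR : (0 : ℝ) < (n : ℝ) ^ 2 := by positivity
    have hfm : c * (m : ℝ) ^ 2 ≤ f (u, v) := by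
      have h1 : c * (n : ℝ) ^ 2 * ((m : ℝ) * (m : ℝ)) ≤ (n : ℝ) ^ 2 * f (u, v) := by
        calc c * (n : ℝ) ^ 2 * ((m : ℝ) * (m : ℝ))
            ≤ (S.card : ℝ) * (B.card * B.card) := by
              have hm0 : (0:ℝ) ≤ (m:ℝ) := Nat.cast_nonneg m
              have hB0 : (0:ℝ) ≤ (B.card:ℝ) := Nat.cast_nonneg _
              have hmm : (m:ℝ) * (m:ℝ) ≤ (B.card:ℝ) * (B.card:ℝ) :=
                mul_le_mul hBmR hBmR hm0 hB0
              exact mul_le_mul hS hmm (by positivity) (Nat.cast_nonneg _)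
          _ ≤ (n : ℝ) ^ 2 * f (u, v) := hwR
      nlinarith
    have hkm : (k : ℝ) ≤ 32 * m := by
      have : k ≤ 32 * m := by omega
      exact_mod_cast this
    have hfin : (c / 2 ^ 10) * (k : ℝ) ^ 2 ≤ c * (m : ℝ) ^ 2 := by
      have hk0 : (0:ℝ) ≤ (k:ℝ) := Nat.cast_nonneg k
      have hsq : (k:ℝ) * (k:ℝ) ≤ (32 * (m:ℝ)) * (32 * (m:ℝ)) :=
        mul_self_le_mul_self hk0 hkm
      calc (c / 2 ^ 10) * (k : ℝ) ^ 2 ≤ (c / 2 ^ 10) * (1024 * (m:ℝ) ^ 2) := by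
            apply mul_le_mul_of_nonneg_left _ (by positivity)
            nlinarith
        _ = c * (m : ℝ) ^ 2 := by ring
    have hfc : (f (u, v) : ℝ)
        ≤ ((S.filter fun p => p.1 ∈ T ∧ p.2 ∈ T ∧ p.1 * p.2 ∈ T).card : ℝ) := by
      exact_mod_cast hcount
    linarith
end

section
/- Let m ≥ 2, 1 ≤ t < m, ρ ≥ 1, n ≥ ρ+1, and let A_x ⊆ Z_m^n be as in the model construction. Among the (ρ+1)-th coordinates of elements of A_x, the value x_{ρ+1} appears exactly m^ρ − 1 times while each value x_{ρ+1}+j for 1 ≤ j ≤ t−1 appears exactly m^ρ times; in particular x_{ρ+1} is the unique minimally-occurring value, determining the (ρ+1)-th coordinate of x from A_x. -/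
/-!
Before `x` is removed, the elements of `A_x ∪ {x}` whose coordinate `ρ` equals an admissible
value `v = x_ρ + j` are exactly the vectors that agree with `Function.update x ρ v` outside the
first `ρ` coordinates, so every such fibre has `m ^ ρ` elements. Removing `x` shrinks only the
fibre over `x_ρ`, and the values `x_ρ + j` with `0 < j < t < m` differ from `x_ρ`.
-/

open Finset

theorem card_filter_forall_not_imp_eq {ι α : Type*} [Fintype ι] [DecidableEq ι] [Fintype α]
    [DecidableEq α] (p : ι → Prop) [DecidablePred p] (y : ι → α) :
    #{z : ι → α | ∀ i, ¬ p i → z i = y i} = Fintype.card α ^ #{i | p i} := by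
  have hpi : ({z : ι → α | ∀ i, ¬ p i → z i = y i} : Finset (ι → α)) =
      Fintype.piFinset fun i => if p i then univ else {y i} := by
    ext z
    simp only [mem_filter, mem_univ, true_and, Fintype.mem_piFinset]
    refine forall_congr' fun i => ?_
    split_ifs <;> simp [*]
  simp only [hpi, Fintype.card_piFinset, apply_ite card, card_univ, card_singleton]
  rw [prod_ite, prod_const, prod_const_one, mul_one]

def modelBlock {m n ρ : ℕ} [NeZero m] (t : ℕ) (hρ : ρ < n) (x : Fin n → ZMod m) :
    Finset (Fin n → ZMod m) :=
  {z : Fin n → ZMod m | (∀ j : Fin n, ρ < (j : ℕ) → z j = x j) ∧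
    ∃ i : Fin t, z ⟨ρ, hρ⟩ = x ⟨ρ, hρ⟩ + ((i : ℕ) : ZMod m)}

section Model

variable {m n ρ t : ℕ} [NeZero m] (hρ : ρ < n) (x : Fin n → ZMod m)

theorem modelA_eq_erase : modelA m n ρ t hρ x = (modelBlock t hρ x).erase x := rfl

theorem mem_modelBlock_self (ht : 0 < t) : x ∈ modelBlock t hρ x := by
  simp only [modelBlock, mem_filter, mem_univ, true_and, implies_true]
  exact ⟨⟨0, ht⟩, by simp⟩

theorem card_filter_modelBlock {v : ZMod m}
    (hv : ∃ i : Fin t, v = x ⟨ρ, hρ⟩ + ((i : ℕ) : ZMod m)) :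
    #{z ∈ modelBlock t hρ x | z ⟨ρ, hρ⟩ = v} = m ^ ρ := by
  set k : Fin n := ⟨ρ, hρ⟩
  have hfib : {z ∈ modelBlock t hρ x | z k = v} =
      ({z | ∀ j : Fin n, ¬ (j : ℕ) < ρ → z j = Function.update x k v j} :
        Finset (Fin n → ZMod m)) := by
    ext z
    simp only [modelBlock, mem_filter, mem_univ, true_and]
    constructor
    · rintro ⟨⟨hx, -⟩, rfl⟩ j hj
      rcases eq_or_ne j k with rfl | hjk
      · simp
      · rw [Function.update_of_ne hjk]
        exact hx j (by simp [Fin.ext_iff, k] at hjk; omega)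
    · intro h
      have hzk : z k = v := by simpa using h k (by simp [k])
      refine ⟨⟨fun j hj => ?_, hzk ▸ hv⟩, hzk⟩
      rw [h j (by omega), Function.update_of_ne (by simp [Fin.ext_iff, k]; omega)]
  calc #{z ∈ modelBlock t hρ x | z k = v}
      = Fintype.card (ZMod m) ^ #{j : Fin n | (j : ℕ) < ρ} := by
        rw [hfib]
        -- `convert` only has to reconcile the `Decidable` instances of the two filters
        convert card_filter_forall_not_imp_eq _ (Function.update x k v)
    _ = m ^ ρ := by rw [ZMod.card, Fin.card_filter_val_lt, min_eq_right hρ.le]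

theorem exists_shift_of_mem_modelA {z : Fin n → ZMod m} (hz : z ∈ modelA m n ρ t hρ x) :
    ∃ i : Fin t, z ⟨ρ, hρ⟩ = x ⟨ρ, hρ⟩ + ((i : ℕ) : ZMod m) := by
  rw [modelA_eq_erase] at hz
  simp only [modelBlock, mem_erase, mem_filter, mem_univ, true_and] at hz
  exact hz.2.2

theorem card_filter_modelA_self (ht : 0 < t) :
    #{z ∈ modelA m n ρ t hρ x | z ⟨ρ, hρ⟩ = x ⟨ρ, hρ⟩} = m ^ ρ - 1 := by
  have hx : x ∈ {z ∈ modelBlock t hρ x | z ⟨ρ, hρ⟩ = x ⟨ρ, hρ⟩} :=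
    mem_filter.mpr ⟨mem_modelBlock_self hρ x ht, rfl⟩
  rw [modelA_eq_erase, filter_erase, card_erase_of_mem hx,
    card_filter_modelBlock hρ x ⟨⟨0, ht⟩, by simp⟩]

theorem card_filter_modelA_of_ne {v : ZMod m}
    (hv : ∃ i : Fin t, v = x ⟨ρ, hρ⟩ + ((i : ℕ) : ZMod m)) (hvx : v ≠ x ⟨ρ, hρ⟩) :
    #{z ∈ modelA m n ρ t hρ x | z ⟨ρ, hρ⟩ = v} = m ^ ρ := by
  have hx : x ∉ {z ∈ modelBlock t hρ x | z ⟨ρ, hρ⟩ = v} :=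
    fun h => hvx (mem_filter.mp h).2.symm
  rw [modelA_eq_erase, filter_erase, erase_eq_of_notMem hx, card_filter_modelBlock hρ x hv]

end Model

theorem stmt_19_general (m n ρ t : ℕ) [NeZero m] (ht : 1 ≤ t) (htm : t < m)
    (hρ : ρ < n) (x : Fin n → ZMod m) :
    (((modelA m n ρ t hρ x).filter fun z => z ⟨ρ, hρ⟩ = x ⟨ρ, hρ⟩).card = m ^ ρ - 1) ∧
    (∀ j : ℕ, 1 ≤ j → j < t →
      ((modelA m n ρ t hρ x).filter fun z =>
        z ⟨ρ, hρ⟩ = x ⟨ρ, hρ⟩ + (j : ZMod m)).card = m ^ ρ) ∧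
    (∀ v : ZMod m, (∃ z ∈ modelA m n ρ t hρ x, z ⟨ρ, hρ⟩ = v) → v ≠ x ⟨ρ, hρ⟩ →
      ((modelA m n ρ t hρ x).filter fun z => z ⟨ρ, hρ⟩ = v).card = m ^ ρ) := by
  refine ⟨card_filter_modelA_self hρ x ht, fun j hj hjt => ?_, ?_⟩
  · have hj0 : (j : ZMod m) ≠ 0 :=
      (ZMod.natCast_eq_zero_iff j m).not.mpr (Nat.not_dvd_of_pos_of_lt hj (hjt.trans htm))
    exact card_filter_modelA_of_ne hρ x ⟨⟨j, hjt⟩, rfl⟩ (by simpa using hj0)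
  · rintro v ⟨z, hz, rfl⟩ hvx
    exact card_filter_modelA_of_ne hρ x (exists_shift_of_mem_modelA hρ x hz) hvx

/-- among the `(ρ+1)`-th coordinates (0-indexed: coordinate `ρ`) of elements
of `A_x`, the value `x ρ` appears exactly `m^ρ − 1` times, each value `x ρ + j` with
`1 ≤ j ≤ t−1` appears exactly `m^ρ` times, and every other occurring value appears `m^ρ`
times; so `x ρ` is the unique minimally-occurring value. -/
theorem stmt_19 (m n ρ t : ℕ) [NeZero m] (hm : 2 ≤ m) (ht : 1 ≤ t) (htm : t < m)
    (hρ1 : 1 ≤ ρ) (hρ : ρ < n) (x : Fin n → ZMod m) :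
    (((modelA m n ρ t hρ x).filter fun z => z ⟨ρ, hρ⟩ = x ⟨ρ, hρ⟩).card = m ^ ρ - 1) ∧
    (∀ j : ℕ, 1 ≤ j → j < t →
      ((modelA m n ρ t hρ x).filter fun z =>
        z ⟨ρ, hρ⟩ = x ⟨ρ, hρ⟩ + (j : ZMod m)).card = m ^ ρ) ∧
    (∀ v : ZMod m, (∃ z ∈ modelA m n ρ t hρ x, z ⟨ρ, hρ⟩ = v) → v ≠ x ⟨ρ, hρ⟩ →
      ((modelA m n ρ t hρ x).filter fun z => z ⟨ρ, hρ⟩ = v).card = m ^ ρ) :=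
  stmt_19_general m n ρ t ht htm hρ x
end
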